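/- Under Assumption 2.2 and the condition σ/(4eβ) ≤ C₁ ≤ (1/2)·max{σ/β, 1/4}, the transition point of the mesh generated by φ satisfies x_{N/4} ≤ 1/4, and there exist constants C₄ > 0 and C₅ > 0 depending only on σ and β (independent of ε and N) such that C₄·N⁻¹ ≤ h_i ≤ C₅·N⁻¹ for every integer i with N/4 ≤ i ≤ N/2. -/
import Mathlib


/-- The Bakhvalov-type mesh generating function of Kopteva, with transition
parameter `ϑ = 1/4 - C₁ ε`. -/
noncomputable def phi (β σ ε C₁ : ℝ) (t : ℝ) : ℝ :=
  if t ≤ 1/4 - C₁ * ε then -(σ * ε / β) * Real.log (1 - 4 * t)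
  else if t < 1 - (1/4 - C₁ * ε) then
    ((1 + (σ * ε / β) * Real.log (4 * C₁ * ε)) / (1 - 2 * (1/4 - C₁ * ε)))
        * (t - (1/4 - C₁ * ε))
      + ((σ * ε / β) * Real.log (4 * C₁ * ε) / (1 - 2 * (1/4 - C₁ * ε)))
        * (t - (1 - (1/4 - C₁ * ε)))
  else 1 + (σ * ε / β) * Real.log (1 - 4 * (1 - t))

/-- Mesh points `x_i = φ(i/N)`. -/
noncomputable def meshXK (β σ ε C₁ : ℝ) (N i : ℕ) : ℝ := phi β σ ε C₁ ((i : ℝ) / (N : ℝ))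

/-- Mesh step sizes `h_i = x_{i+1} - x_i`. -/
noncomputable def meshHK (β σ ε C₁ : ℝ) (N i : ℕ) : ℝ :=
  meshXK β σ ε C₁ N (i + 1) - meshXK β σ ε C₁ N i

lemma aux_u_bound (u : ℝ) (h0 : 0 < u) (h32 : u ≤ 1/32) :
    u - u * Real.log u ≤ 9/64 := by
  have hy : (32:ℝ) ≤ u⁻¹ :=
    (le_inv_comm₀ (by norm_num) h0).mpr (by norm_num; linarith)
  have he32 : Real.exp 1 ≤ 32 := le_trans Real.exp_one_lt_d9.le (by norm_num)
  have hey : Real.exp 1 ≤ u⁻¹ := le_trans he32 hy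
  have hmono : Real.log u⁻¹ / u⁻¹ ≤ Real.log 32 / 32 :=
    Real.log_div_self_antitoneOn (by simpa using he32) (by simpa using hey) hy
  have hlog32 : Real.log 32 ≤ 3.5 := by
    have h5 : (32:ℝ) = 2^5 := by norm_num
    rw [h5, Real.log_pow]
    have := Real.log_two_lt_d9
    push_cast
    linarith
  have h1 : Real.log u⁻¹ / u⁻¹ = -(u * Real.log u) := by
    rw [Real.log_inv, div_eq_mul_inv, inv_inv]
    ring
  rw [h1] at hmono
  have hu32' : u ≤ 1/32 := h32
  nlinarith [hmono]

lemma phi_lin (β σ ε C₁ t : ℝ) (h1 : 1/4 - C₁*ε < t) (h2 : t < 1 - (1/4 - C₁*ε)) :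
    phi β σ ε C₁ t =
      ((1 + (σ * ε / β) * Real.log (4 * C₁ * ε)) * (t - (1/4 - C₁ * ε))
        + (σ * ε / β) * Real.log (4 * C₁ * ε) * (t - (1 - (1/4 - C₁ * ε))))
      / (1/2 + 2 * (C₁ * ε)) := by
  rw [phi, if_neg (not_le.mpr h1), if_pos h2]
  have hd : 1 - 2 * (1/4 - C₁ * ε) = 1/2 + 2 * (C₁ * ε) := by ring
  rw [hd]
  ring

set_option maxHeartbeats 1000000 in
theorem stmt_17 (β σ C₁ : ℝ) (hβ : 0 < β) (hσ : 0 < σ)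
    (hC₁l : σ / (4 * Real.exp 1 * β) ≤ C₁)
    (hC₁u : C₁ ≤ 1 / 2 * max (σ / β) (1 / 4)) :
    ∃ C₄ C₅ : ℝ, 0 < C₄ ∧ 0 < C₅ ∧
      ∀ (ε : ℝ) (N : ℕ), 0 < ε → ε < 1 → 4 ∣ N →
        max 8 (2 * Real.log (σ / β)) ≤ (N : ℝ) →
        ε ≤ min (β / (4 * σ)) 1 * (N : ℝ)⁻¹ →
        meshXK β σ ε C₁ N (N / 4) ≤ 1 / 4 ∧
        ∀ i : ℕ, N / 4 ≤ i → i ≤ N / 2 →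
          C₄ * (N : ℝ)⁻¹ ≤ meshHK β σ ε C₁ N i ∧
          meshHK β σ ε C₁ N i ≤ C₅ * (N : ℝ)⁻¹ := by
  refine ⟨1, 2, one_pos, two_pos, ?_⟩
  intro ε N hε hε1 hN4 hNmax hεN
  have hexp : (0:ℝ) < Real.exp 1 := Real.exp_pos 1
  have hN8 : (8:ℝ) ≤ (N:ℝ) := le_trans (le_max_left _ _) hNmax
  have hN0 : (0:ℝ) < (N:ℝ) := by linarith
  have hNinv : (0:ℝ) < (N:ℝ)⁻¹ := inv_pos.mpr hN0
  have hNinv8 : (N:ℝ)⁻¹ ≤ 1/8 := by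
    rw [inv_le_comm₀ hN0 (by norm_num)]
    norm_num
    exact_mod_cast hN8
  have hC₁pos : 0 < C₁ := lt_of_lt_of_le (by positivity) hC₁l
  have hθpos : 0 < C₁ * ε := by positivity
  have hmaxmin : max (σ / β) (1/4) * min (β / (4*σ)) 1 ≤ 1/4 := by
    rcases le_total (σ/β) (1/4) with h | h
    · rw [max_eq_right h]
      have h1 : min (β / (4*σ)) 1 ≤ 1 := min_le_right _ _
      have h0 : 0 ≤ min (β / (4*σ)) 1 := le_min (by positivity) zero_le_one
      nlinarith
    · have hble : β / (4*σ) ≤ 1 := by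
        rw [div_le_one (by positivity)]
        rw [le_div_iff₀ hβ] at h
        linarith
      rw [max_eq_left h, min_eq_left hble]
      rw [div_mul_div_comm, div_le_div_iff₀ (by positivity) (by norm_num)]
      nlinarith
  have hmaxpos : (0:ℝ) < max (σ / β) (1/4) := lt_max_of_lt_right (by norm_num)
  have hminpos : (0:ℝ) < min (β / (4*σ)) 1 := lt_min (by positivity) one_pos
  have hθN : C₁ * ε ≤ 1/8 * (N:ℝ)⁻¹ := by
    calc C₁ * ε ≤ C₁ * (min (β / (4*σ)) 1 * (N:ℝ)⁻¹) :=
          mul_le_mul_of_nonneg_left hεN hC₁pos.le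
      _ ≤ (1/2 * max (σ / β) (1/4)) * (min (β / (4*σ)) 1 * (N:ℝ)⁻¹) := by
          apply mul_le_mul_of_nonneg_right hC₁u (by positivity)
      _ ≤ 1/8 * (N:ℝ)⁻¹ := by nlinarith
  have hθ64 : C₁ * ε ≤ 1/64 := by nlinarith
  set u : ℝ := σ * ε / β with hu_def
  have hu0 : 0 < u := by positivity
  have huN : u ≤ 1/4 * (N:ℝ)⁻¹ := by
    have hε' : ε ≤ β / (4*σ) * (N:ℝ)⁻¹ :=
      le_trans hεN (mul_le_mul_of_nonneg_right (min_le_left _ _) hNinv.le)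
    rw [hu_def, div_le_iff₀ hβ]
    have h2 : σ * ε ≤ σ * (β / (4*σ) * (N:ℝ)⁻¹) := mul_le_mul_of_nonneg_left hε' hσ.le
    have h3 : σ * (β / (4*σ) * (N:ℝ)⁻¹) = 1/4 * (N:ℝ)⁻¹ * β := by
      field_simp
    linarith
  have hu32 : u ≤ 1/32 := by nlinarith
  set L : ℝ := σ * ε / β * Real.log (4 * C₁ * ε) with hL_def
  have h4C1 : 4 * C₁ * ε ≤ 1/16 := by linarith
  have h4Cpos : 0 < 4 * C₁ * ε := by positivity
  have hLneg : L ≤ 0 := by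
    rw [hL_def]
    exact mul_nonpos_of_nonneg_of_nonpos (by positivity)
      (Real.log_nonpos h4Cpos.le (by linarith))
  have hmL : -L ≤ 9/64 := by
    have h1 : u / Real.exp 1 ≤ 4 * C₁ * ε := by
      rw [hu_def, div_div, div_le_iff₀ (by positivity)]
      rw [div_le_iff₀ (by positivity)] at hC₁l
      nlinarith
    have h2 : Real.log (u / Real.exp 1) ≤ Real.log (4 * C₁ * ε) :=
      Real.log_le_log (by positivity) h1
    have h3 : Real.log (u / Real.exp 1) = Real.log u - 1 := by
      rw [Real.log_div hu0.ne' (Real.exp_ne_zero 1), Real.log_exp]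
    have h4 : -L ≤ u * (1 - Real.log u) := by
      rw [hL_def, ← hu_def]
      nlinarith [mul_le_mul_of_nonneg_left h2 hu0.le]
    have h5 := aux_u_bound u hu0 hu32
    nlinarith
  have hP : (0:ℝ) < 1/2 + 2 * (C₁ * ε) := by linarith
  constructor
  · -- x_{N/4} ≤ 1/4
    obtain ⟨m, rfl⟩ := hN4
    have hm0 : (m:ℝ) ≠ 0 := by
      intro h
      rw [show ((4*m : ℕ):ℝ) = 4*(m:ℝ) by push_cast; ring, h] at hN0
      norm_num at hN0
    have hdiv : 4 * m / 4 = m := Nat.mul_div_cancel_left m (by norm_num)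
    have hcast : ((m:ℕ):ℝ) / ((4*m : ℕ):ℝ) = 1/4 := by
      push_cast
      rw [div_eq_div_iff (by positivity) (by norm_num)]
      ring
    rw [meshXK, hdiv, hcast, phi_lin β σ ε C₁ (1/4) (by linarith) (by linarith)]
    rw [div_le_iff₀ hP, ← hL_def]
    nlinarith
  · intro i hi1 hi2
    obtain ⟨m, rfl⟩ := hN4
    have hdiv4 : 4 * m / 4 = m := Nat.mul_div_cancel_left m (by norm_num)
    have hdiv2 : 4 * m / 2 = 2 * m := by omega
    rw [hdiv4] at hi1
    rw [hdiv2] at hi2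
    have hNm : ((4*m : ℕ):ℝ) = 4 * (m:ℝ) := by push_cast; ring
    have hmi : (m:ℝ) ≤ (i:ℝ) := by exact_mod_cast hi1
    have him : (i:ℝ) ≤ 2 * (m:ℝ) := by exact_mod_cast hi2
    have hm2 : (2:ℝ) ≤ (m:ℝ) := by
      rw [hNm] at hN8
      linarith
    have hN0' : (0:ℝ) < ((4*m:ℕ):ℝ) := hN0
    have ht1l : 1/4 - C₁*ε < (i:ℝ) / ((4*m:ℕ):ℝ) := by
      have h14 : (1:ℝ)/4 ≤ (i:ℝ) / ((4*m:ℕ):ℝ) := by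
        rw [le_div_iff₀ hN0', hNm]
        linarith
      linarith
    have ht2u : ((i+1:ℕ):ℝ) / ((4*m:ℕ):ℝ) < 1 - (1/4 - C₁*ε) := by
      have : ((i+1:ℕ):ℝ) / ((4*m:ℕ):ℝ) < 3/4 := by
        rw [div_lt_iff₀ hN0', hNm]
        push_cast
        linarith
      linarith
    have ht2l : 1/4 - C₁*ε < ((i+1:ℕ):ℝ) / ((4*m:ℕ):ℝ) := by
      refine lt_of_lt_of_le ht1l ?_
      gcongr
      push_cast
      linarith
    have ht1u : (i:ℝ) / ((4*m:ℕ):ℝ) < 1 - (1/4 - C₁*ε) := by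
      refine lt_of_le_of_lt ?_ ht2u
      gcongr
      push_cast
      linarith
    have hstep : meshHK β σ ε C₁ (4*m) i
        = (1 + 2*L) / (1/2 + 2*(C₁*ε)) * ((4*m:ℕ):ℝ)⁻¹ := by
      rw [meshHK, meshXK, meshXK,
        phi_lin β σ ε C₁ _ ht2l ht2u, phi_lin β σ ε C₁ _ ht1l ht1u, ← hL_def]
      rw [div_sub_div_same, div_mul_eq_mul_div]
      congr 1
      have hiN : ((i+1:ℕ):ℝ) = (i:ℝ) + 1 := by push_cast; ring
      rw [hiN]
      field_simp
      ring
    rw [hstep]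
    have hD1 : 1 ≤ (1 + 2*L) / (1/2 + 2*(C₁*ε)) := by
      rw [le_div_iff₀ hP]
      linarith
    have hD2 : (1 + 2*L) / (1/2 + 2*(C₁*ε)) ≤ 2 := by
      rw [div_le_iff₀ hP]
      linarith
    constructor
    · exact mul_le_mul_of_nonneg_right hD1 (by positivity)
    · exact mul_le_mul_of_nonneg_right hD2 (by positivity)
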